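/- arXiv:1101.3064 — 2 statements merged into one kernel-verified Lean document; each statement's English description precedes it below -/
import Mathlib

section
/- Let T be a strongly cartesian monad on a finitely complete category E, and let A be a dense generator of E. Then A embeds in a minimal T-generically closed dense generator A_T, and every T-cartesian monad S on E has arities A_T; in particular, for every f:B→SX with B in A_T, an S-generic factorisation of f is an initial object of Fact_{A_T}(S,f), so these factorisation categories are connected. -/
open CategoryTheory CategoryTheory.Limits

universe w v u

section Defs

variable {A : Type w} [Category.{v} A] {E : Type u} [Category.{v} E]

def canCocone (i : A ⥤ E) (X : E) : Cocone (CostructuredArrow.proj i X ⋙ i) where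
  pt := X
  ι :=
    { app := fun f => f.hom
      naturality := fun f g m => (CostructuredArrow.w m).trans (Category.comp_id _).symm }

def RGeneric (R : E ⥤ E) {B : E} {A₀ : E} (g : B ⟶ R.obj A₀) : Prop :=
  ∀ {A' X : E} (α : B ⟶ R.obj A') (β : A₀ ⟶ X) (γ : A' ⟶ X),
    g ≫ R.map β = α ≫ R.map γ →
      ∃! δ : A₀ ⟶ A', g ≫ R.map δ = α ∧ δ ≫ γ = β

structure FactCat (i : A ⥤ E) (Fn : E ⥤ E) (B : E) (X : E) (f : B ⟶ Fn.obj X) where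
  a : A
  g : B ⟶ Fn.obj (i.obj a)
  h : i.obj a ⟶ X
  fac : g ≫ Fn.map h = f

instance (i : A ⥤ E) (Fn : E ⥤ E) (B : E) (X : E) (f : B ⟶ Fn.obj X) :
    Category (FactCat i Fn B X f) where
  Hom o₁ o₂ := {k : o₁.a ⟶ o₂.a //
    o₁.g ≫ Fn.map (i.map k) = o₂.g ∧ i.map k ≫ o₂.h = o₁.h}
  id o := ⟨𝟙 _, by simp⟩
  comp {o₁ o₂ o₃} k l := ⟨k.1 ≫ l.1, by
    obtain ⟨k, hk1, hk2⟩ := k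
    obtain ⟨l, hl1, hl2⟩ := l
    constructor
    · simp [← hl1, ← hk1]
    · simp [hk2, hl2]⟩
  id_comp f := by apply Subtype.ext; simp
  comp_id f := by apply Subtype.ext; simp
  assoc f g h := by apply Subtype.ext; simp

/-- A cartesian monad: the endofunctor preserves pullbacks and all naturality
squares of the unit and the multiplication are pullbacks. -/
def CartesianMonad (T : Monad E) : Prop :=
  Nonempty (PreservesLimitsOfShape WalkingCospan T.toFunctor) ∧
  (∀ {X Y : E} (f : X ⟶ Y), IsPullback (T.η.app X) f (T.map f) (T.η.app Y)) ∧
  (∀ {X Y : E} (f : X ⟶ Y),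
    IsPullback (T.μ.app X) (T.map (T.map f)) (T.map f) (T.μ.app Y))

/-- A strongly cartesian monad: cartesian and the endofunctor is a local right
adjoint. -/
def StronglyCartesianMonad (T : Monad E) : Prop :=
  CartesianMonad T ∧
    ∀ X : E, (Over.post T.toFunctor (X := X)).IsRightAdjoint

/-- A cartesian monad morphism: all naturality squares are pullbacks. -/
def CartesianHom {S T : Monad E} (φ : S ⟶ T) : Prop :=
  ∀ {X Y : E} (f : X ⟶ Y),
    IsPullback (φ.toNatTrans.app X) (S.map f) (T.map f) (φ.toNatTrans.app Y)

end Defs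

/-!
For `t : B ⟶ T 1`, the unit of the left adjoint `L` of `Over.post T : E/1 ⥤ E/T1` factors `t`
as `B ⟶ T (L t) ⟶ T 1`, and every other factorisation `B ⟶ T Z ⟶ T 1` is uniquely induced
from it. As `T` preserves pullbacks, this unit is `T`-generic, and two generic morphisms out of
`B` lying over a common map have isomorphic targets. Hence `A_T` is the closure of `A` under
`B ↦ L t`: a countable union of small stages, dense because it contains `A`, and contained in
every generically closed, isomorphism-closed class. For a cartesian `φ : S ⟶ T`, pulling the
`T`-generic factorisation of `φ ∘ f` back along the cartesian naturality square of `φ` gives an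
`S`-generic factorisation of `f` through `L t ∈ A_T`, and a generic factorisation is initial
among all factorisations.
-/

section OverPostLeftAdjoint

variable {C : Type*} [Category C] {D : Type*} [Category D] [HasTerminal C]
  (R : C ⥤ D) [(Over.post R (X := ⊤_ C)).IsRightAdjoint]

noncomputable def genericTarget {B : D} (t : B ⟶ R.obj (⊤_ C)) : C :=
  ((Over.post R).leftAdjoint.obj (Over.mk t)).left

noncomputable def genericUnit {B : D} (t : B ⟶ R.obj (⊤_ C)) :
    B ⟶ R.obj (genericTarget R t) :=
  ((Adjunction.ofIsRightAdjoint (Over.post R)).unit.app (Over.mk t)).left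

variable {R}

lemma genericUnit_comp_map_from {B : D} (t : B ⟶ R.obj (⊤_ C)) :
    genericUnit R t ≫ R.map (terminal.from _) = t :=
  calc genericUnit R t ≫ R.map (terminal.from _)
      = genericUnit R t ≫ R.map ((Over.post R).leftAdjoint.obj (Over.mk t)).hom := by
        congr 2; exact terminal.hom_ext _ _
    _ = t := Over.w ((Adjunction.ofIsRightAdjoint (Over.post R)).unit.app (Over.mk t))

lemma homEquiv_left_eq_genericUnit_comp_map {B : D} (t : B ⟶ R.obj (⊤_ C)) {Z : C}
    (δ : (Over.post R).leftAdjoint.obj (Over.mk t) ⟶ Over.mk (terminal.from Z)) :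
    ((Adjunction.ofIsRightAdjoint (Over.post R)).homEquiv _ _ δ).left =
      genericUnit R t ≫ R.map δ.left := by
  rw [Adjunction.homEquiv_unit, Over.comp_left]
  rfl

lemma exists_genericUnit_comp_map {B : D} (t : B ⟶ R.obj (⊤_ C)) {Z : C}
    (α : B ⟶ R.obj Z) (hα : α ≫ R.map (terminal.from Z) = t) :
    ∃ δ : genericTarget R t ⟶ Z, genericUnit R t ≫ R.map δ = α := by
  let δ := ((Adjunction.ofIsRightAdjoint (Over.post R)).homEquiv _ _).symm
    (Over.homMk (U := Over.mk t) (V := (Over.post R).obj (Over.mk (terminal.from Z))) α hα)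
  refine ⟨δ.left, ?_⟩
  rw [← homEquiv_left_eq_genericUnit_comp_map, Equiv.apply_symm_apply]
  rfl

lemma genericUnit_map_cancel {B : D} {t : B ⟶ R.obj (⊤_ C)} {Z : C}
    {δ δ' : genericTarget R t ⟶ Z}
    (h : genericUnit R t ≫ R.map δ = genericUnit R t ≫ R.map δ') :
    δ = δ' := by
  let homMk (ε : genericTarget R t ⟶ Z) :
      (Over.post R).leftAdjoint.obj (Over.mk t) ⟶ Over.mk (terminal.from Z) :=
    Over.homMk ε (terminal.hom_ext _ _)
  have : homMk δ = homMk δ' :=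
    ((Adjunction.ofIsRightAdjoint (Over.post R)).homEquiv _ _).injective <| by
      ext
      rw [homEquiv_left_eq_genericUnit_comp_map, homEquiv_left_eq_genericUnit_comp_map]
      exact h
  exact congrArg CommaMorphism.left this

end OverPostLeftAdjoint

section Generic

variable {E : Type*} [Category E] {R : E ⥤ E}

lemma RGeneric.eq_id {B Y X : E} {g : B ⟶ R.obj Y} (hg : RGeneric R g) (β : Y ⟶ X)
    {e : Y ⟶ Y} (h₁ : g ≫ R.map e = g) (h₂ : e ≫ β = β) : e = 𝟙 Y :=
  (hg g β β rfl).unique ⟨h₁, h₂⟩ ⟨by simp, by simp⟩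

lemma RGeneric.nonempty_iso {B Y Y' X : E} {g : B ⟶ R.obj Y} {g' : B ⟶ R.obj Y'}
    (hg : RGeneric R g) (hg' : RGeneric R g') (β : Y ⟶ X) (β' : Y' ⟶ X)
    (h : g ≫ R.map β = g' ≫ R.map β') : Nonempty (Y ≅ Y') := by
  obtain ⟨δ, ⟨hδ₁, hδ₂⟩, -⟩ := hg g' β β' h
  obtain ⟨δ', ⟨hδ'₁, hδ'₂⟩, -⟩ := hg' g β' β h.symm
  exact ⟨⟨δ, δ',
    hg.eq_id β (by rw [R.map_comp, ← Category.assoc, hδ₁, hδ'₁])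
      (by rw [Category.assoc, hδ'₂, hδ₂]),
    hg'.eq_id β' (by rw [R.map_comp, ← Category.assoc, hδ'₁, hδ₁])
      (by rw [Category.assoc, hδ₂, hδ'₂])⟩⟩

lemma RGeneric.of_comp_cartesian {R' : E ⥤ E} (φ : R' ⟶ R)
    (hφ : ∀ {X Y : E} (f : X ⟶ Y), IsPullback (φ.app X) (R'.map f) (R.map f) (φ.app Y))
    {B Y : E} {g : B ⟶ R'.obj Y} (hg : RGeneric R (g ≫ φ.app Y)) : RGeneric R' g := by
  intro Y' X α β γ hcomm
  have hcommR : (g ≫ φ.app Y) ≫ R.map β = (α ≫ φ.app Y') ≫ R.map γ := by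
    simp only [Category.assoc, ← φ.naturality]
    rw [← Category.assoc, hcomm, Category.assoc]
  obtain ⟨δ, ⟨hδ₁, hδ₂⟩, hδ_uniq⟩ := hg _ β γ hcommR
  refine ⟨δ, ⟨(hφ γ).hom_ext ?_ ?_, hδ₂⟩,
    fun δ' ⟨h₁, h₂⟩ => hδ_uniq δ' ⟨?_, h₂⟩⟩
  · rw [Category.assoc, φ.naturality, ← Category.assoc, hδ₁]
  · rw [Category.assoc, ← R'.map_comp, hδ₂, hcomm]
  · rw [Category.assoc, ← φ.naturality, ← Category.assoc, h₁]

section LocalRightAdjoint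

variable [HasTerminal E] [HasPullbacks E] [PreservesLimitsOfShape WalkingCospan R]
  [(Over.post R (X := ⊤_ E)).IsRightAdjoint]

lemma genericUnit_rGeneric {B : E} (t : B ⟶ R.obj (⊤_ E)) : RGeneric R (genericUnit R t) := by
  intro Y X α β γ hcomm
  have hRP := (IsPullback.of_hasPullback β γ).map R
  set m := hRP.lift _ _ hcomm
  have hm : m ≫ R.map (terminal.from _) = t := by
    rw [← terminal.comp_from (pullback.fst β γ), R.map_comp, ← Category.assoc, hRP.lift_fst,
      genericUnit_comp_map_from]
  obtain ⟨e, he⟩ := exists_genericUnit_comp_map t m hm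
  have he_fst : e ≫ pullback.fst β γ = 𝟙 _ := genericUnit_map_cancel <| by
    rw [R.map_comp, ← Category.assoc, he, hRP.lift_fst, R.map_id, Category.comp_id]
  refine ⟨e ≫ pullback.snd β γ, ⟨?_, ?_⟩, ?_⟩
  · rw [R.map_comp, ← Category.assoc, he, hRP.lift_snd]
  · rw [Category.assoc, ← pullback.condition, ← Category.assoc, he_fst, Category.id_comp]
  · rintro δ ⟨hδ₁, hδ₂⟩
    -- `(𝟙, δ)` also lifts `m`, so it is `e`
    have hlift : pullback.lift (𝟙 _) δ (by rw [Category.id_comp, hδ₂]) = e :=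
      genericUnit_map_cancel <| by
        rw [he]
        apply hRP.hom_ext
        · rw [Category.assoc, ← R.map_comp, pullback.lift_fst, R.map_id, Category.comp_id,
            hRP.lift_fst]
        · rw [Category.assoc, ← R.map_comp, pullback.lift_snd, hδ₁, hRP.lift_snd]
    rw [← hlift, pullback.lift_snd]

lemma RGeneric.nonempty_genericTarget_iso {B Y : E} {g : B ⟶ R.obj Y} (hg : RGeneric R g) :
    Nonempty (genericTarget R (g ≫ R.map (terminal.from Y)) ≅ Y) :=
  RGeneric.nonempty_iso (genericUnit_rGeneric _) hg _ _ (genericUnit_comp_map_from _)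

lemma exists_rGeneric_factorisation {R' : E ⥤ E} (φ : R' ⟶ R)
    (hφ : ∀ {X Y : E} (f : X ⟶ Y), IsPullback (φ.app X) (R'.map f) (R.map f) (φ.app Y))
    {B X : E} (f : B ⟶ R'.obj X) :
    ∃ (g : B ⟶ R'.obj (genericTarget R (f ≫ φ.app X ≫ R.map (terminal.from X))))
      (h : genericTarget R (f ≫ φ.app X ≫ R.map (terminal.from X)) ⟶ X),
      g ≫ R'.map h = f ∧ RGeneric R' g := by
  obtain ⟨h, hh⟩ := exists_genericUnit_comp_map _ (f ≫ φ.app X) (Category.assoc _ _ _)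
  refine ⟨(hφ h).lift _ f hh, h, (hφ h).lift_snd _ _ _, ?_⟩
  apply RGeneric.of_comp_cartesian φ hφ
  rw [(hφ h).lift_fst]
  exact genericUnit_rGeneric _

end LocalRightAdjoint

end Generic

noncomputable def FactCat.isInitialOfRGeneric {A : Type*} [Category A] {E : Type*} [Category E]
    {i : A ⥤ E} [i.Full] [i.Faithful] {R : E ⥤ E} {B X : E} {f : B ⟶ R.obj X}
    (o : FactCat i R B X f) (ho : RGeneric R o.g) : IsInitial o :=
  have key (o' : FactCat i R B X f) :
      ∃! k : i.obj o.a ⟶ i.obj o'.a, o.g ≫ R.map k = o'.g ∧ k ≫ o'.h = o.h :=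
    ho o'.g o.h o'.h (by rw [o.fac, o'.fac])
  IsInitial.ofUniqueHom
    (fun o' => ⟨i.preimage (key o').choose, by simpa using (key o').choose_spec.1⟩)
    (fun o' k => Subtype.ext <| i.map_injective <| by
      simpa using (key o').choose_spec.2 (i.map k.1) k.2)

lemma nonempty_isColimit_canCocone_ι {A : Type*} [Category A] {E : Type*} [Category E]
    {i : A ⥤ E} (hi : ∀ X, Nonempty (IsColimit (canCocone i X)))
    {P : E → Prop} (hP : ∀ a, P (i.obj a)) (X : E) :
    Nonempty (IsColimit (canCocone (ObjectProperty.ι P) X)) := by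
  let F := CostructuredArrow.pre (ObjectProperty.lift P i hP) (ObjectProperty.ι P) X
  refine ⟨{ desc := fun c => (hi X).some.desc (c.whisker F)
            fac := fun c b => (hi b.left.obj).some.hom_ext fun a => ?_
            uniq := fun c m hm => (hi X).some.uniq (c.whisker F) m fun j => hm (F.obj j) }⟩
  let a' : CostructuredArrow i X := .mk (a.hom ≫ b.hom)
  have h_desc := (hi X).some.fac (c.whisker F) a'
  have h_nat := c.w (CostructuredArrow.homMk (ObjectProperty.homMk a.hom) rfl : F.obj a' ⟶ b)
  exact (Category.assoc _ _ _).symm.trans (h_desc.trans h_nat.symm)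

section GenericClosure

variable {A : Type w} [Category.{v} A] {E : Type u} [Category.{v} E] [HasTerminal E]
  (i : A ⥤ E) (R : E ⥤ E) [(Over.post R (X := ⊤_ E)).IsRightAdjoint]

inductive GenericClosure : E → Prop
  | obj (a : A) : GenericClosure (i.obj a)
  | genericTarget {B : E} (hB : GenericClosure B) (t : B ⟶ R.obj (⊤_ E)) :
      GenericClosure (genericTarget R t)

def genericClosureStage : ℕ → Set E
  | 0 => Set.range i.obj
  | n + 1 => ⋃ B : genericClosureStage n, Set.range (genericTarget R (B := B.1))

lemma small_genericClosureStage (n : ℕ) : Small.{max w v} (genericClosureStage i R n) := by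
  induction n with
  | zero => exact small_range _
  | succ n ih => exact small_iUnion _

lemma GenericClosure.exists_mem_stage {X : E} (hX : GenericClosure i R X) :
    ∃ n, X ∈ genericClosureStage i R n := by
  induction hX with
  | obj a => exact ⟨0, a, rfl⟩
  | @genericTarget B _ t ih =>
    obtain ⟨n, hn⟩ := ih
    exact ⟨n + 1, Set.mem_iUnion.2 ⟨⟨B, hn⟩, t, rfl⟩⟩

lemma small_genericClosure : Small.{max w v} (Subtype (GenericClosure i R)) := by
  have := small_genericClosureStage i R
  exact small_subset (s := ⋃ n, genericClosureStage i R n) fun X hX =>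
    Set.mem_iUnion.2 (GenericClosure.exists_mem_stage i R hX)

lemma GenericClosure.mem_of_closed [HasPullbacks E] [PreservesLimitsOfShape WalkingCospan R]
    {Q : E → Prop} (hQ_obj : ∀ a : A, Q (i.obj a))
    (hQ_iso : ∀ X Y : E, Q X → Nonempty (X ≅ Y) → Q Y)
    (hQ_generic : ∀ (B Y : E), Q B → ∀ g : B ⟶ R.obj Y, RGeneric R g →
      ∃ Y', Q Y' ∧ Nonempty (Y' ≅ Y))
    {X : E} (hX : GenericClosure i R X) : Q X := by
  induction hX with
  | obj a => exact hQ_obj a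
  | genericTarget _ t ih =>
    obtain ⟨Y', hY', hiso⟩ := hQ_generic _ _ ih _ (genericUnit_rGeneric t)
    exact hQ_iso Y' _ hY' hiso

end GenericClosure

theorem stronglyCartesian_canonical_arities_general
    {A : Type v} [SmallCategory A] {E : Type u} [Category.{v} E]
    [HasFiniteLimits E]
    (i : A ⥤ E)
    (hdense : ∀ X : E, Nonempty (IsColimit (canCocone i X)))
    (T : Monad E) (hT : StronglyCartesianMonad T) :
    ∃ P : E → Prop,
      -- `A_T` is small and contains `A`:
      Small.{v} (Subtype P) ∧
      (∀ a : A, P (i.obj a)) ∧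
      -- `A_T` is a dense generator of `E`:
      (∀ X : E, Nonempty (IsColimit (canCocone (ObjectProperty.ι P) X))) ∧
      -- `A_T` is `T`-generically closed:
      (∀ (B Y : E), P B → ∀ g : B ⟶ T.obj Y, RGeneric T.toFunctor g →
        ∃ Y', P Y' ∧ Nonempty (Y' ≅ Y)) ∧
      -- and minimal as such:
      (∀ Q : E → Prop,
        (∀ a : A, Q (i.obj a)) →
        (∀ X Y : E, Q X → Nonempty (X ≅ Y) → Q Y) →
        (∀ (B Y : E), Q B → ∀ g : B ⟶ T.obj Y, RGeneric T.toFunctor g →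
          ∃ Y', Q Y' ∧ Nonempty (Y' ≅ Y)) →
        ∀ X, P X → Q X) ∧
      -- every `T`-cartesian monad `S` has arities `A_T`:
      (∀ (S : Monad E) (φ : S ⟶ T), CartesianHom φ →
        ∀ (b : ObjectProperty.FullSubcategory P) (X : E) (f : b.obj ⟶ S.obj X),
          HasInitial (FactCat (ObjectProperty.ι P) S.toFunctor b.obj X f) ∧
          IsConnected (FactCat (ObjectProperty.ι P) S.toFunctor b.obj X f)) := by
  obtain ⟨⟨⟨_⟩, -, -⟩, hT_local⟩ := hT
  have := hT_local (⊤_ E)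
  refine ⟨GenericClosure i T.toFunctor, small_genericClosure i _, GenericClosure.obj,
    nonempty_isColimit_canCocone_ι hdense GenericClosure.obj,
    fun B Y hB g hg => ⟨_, hB.genericTarget _, RGeneric.nonempty_genericTarget_iso hg⟩,
    fun Q hQ_obj hQ_iso hQ_generic X hX => hX.mem_of_closed i _ hQ_obj hQ_iso hQ_generic,
    fun S φ hφ b X f => ?_⟩
  obtain ⟨g, h, hfac, hg⟩ := exists_rGeneric_factorisation φ.toNatTrans hφ f
  let o : FactCat (ObjectProperty.ι (GenericClosure i T.toFunctor)) S.toFunctor b.obj X f :=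
    ⟨⟨_, b.property.genericTarget _⟩, g, h, hfac⟩
  have hinit := FactCat.isInitialOfRGeneric o hg
  exact ⟨hinit.hasInitial, isConnected_of_isInitial _ hinit⟩

/-- for a strongly cartesian monad `T` on a finitely complete
category `E` with dense generator `A`, the generator `A` embeds in a minimal
`T`-generically closed dense generator `A_T`, and every `T`-cartesian monad `S`
has arities `A_T`: every `f : B ⟶ S X` with `B ∈ A_T` has an `S`-generic
factorisation giving an initial object of `Fact_{A_T}(S,f)`, and these
factorisation categories are connected. -/
theorem stronglyCartesian_canonical_arities
    {A : Type v} [SmallCategory A] {E : Type u} [Category.{v} E]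
    [HasFiniteLimits E]
    (i : A ⥤ E) (hfull : i.Full) (hfaithful : i.Faithful)
    (hdense : ∀ X : E, Nonempty (IsColimit (canCocone i X)))
    (T : Monad E) (hT : StronglyCartesianMonad T) :
    ∃ P : E → Prop,
      -- `A_T` is small and contains `A`:
      Small.{v} (Subtype P) ∧
      (∀ a : A, P (i.obj a)) ∧
      -- `A_T` is a dense generator of `E`:
      (∀ X : E, Nonempty (IsColimit (canCocone (ObjectProperty.ι P) X))) ∧
      -- `A_T` is `T`-generically closed:
      (∀ (B Y : E), P B → ∀ g : B ⟶ T.obj Y, RGeneric T.toFunctor g →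
        ∃ Y', P Y' ∧ Nonempty (Y' ≅ Y)) ∧
      -- and minimal as such:
      (∀ Q : E → Prop,
        (∀ a : A, Q (i.obj a)) →
        (∀ X Y : E, Q X → Nonempty (X ≅ Y) → Q Y) →
        (∀ (B Y : E), Q B → ∀ g : B ⟶ T.obj Y, RGeneric T.toFunctor g →
          ∃ Y', Q Y' ∧ Nonempty (Y' ≅ Y)) →
        ∀ X, P X → Q X) ∧
      -- every `T`-cartesian monad `S` has arities `A_T`:
      (∀ (S : Monad E) (φ : S ⟶ T), CartesianHom φ →
        ∀ (b : ObjectProperty.FullSubcategory P) (X : E) (f : b.obj ⟶ S.obj X),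
          HasInitial (FactCat (ObjectProperty.ι P) S.toFunctor b.obj X f) ∧
          IsConnected (FactCat (ObjectProperty.ι P) S.toFunctor b.obj X f)) :=
  stronglyCartesian_canonical_arities_general i hdense T hT
end

section
/- A bijective-on-objects functor j:A→Θ, where A is a skeleton of the category of finite sets and E = Set, is a theory with arities A (i.e. the monad j^* j_! on PSh(A) preserves flat presheaves) if and only if j preserves finite coproducts, i.e. if and only if Θ^op is a Lawvere algebraic theory; under this identification, Θ-models (presheaves on Θ restricting to flat presheaves on A) coincide with models of the Lawvere theory. -/
open CategoryTheory CategoryTheory.Limits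

universe v₁ u₁ u₂

/-- The functor `ℰ ⥤ Cᵒᵖ ⥤ Type v₁` of the older Mathlib (removed since), restored with its
old definition. -/
def CategoryTheory.Presheaf.restrictedYoneda {C : Type u₁} [Category.{v₁} C] {ℰ : Type u₂}
    [Category.{v₁} ℰ] (A : C ⥤ ℰ) : ℰ ⥤ Cᵒᵖ ⥤ Type v₁ :=
  yoneda ⋙ (Functor.whiskeringLeft _ _ (Type v₁)).obj (Functor.op A)

/-- The inclusion of the skeleton of finite sets into `Set`. -/
def finInclusion : FintypeCat.Skeleton.{0} ⥤ Type :=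
  FintypeCat.Skeleton.incl ⋙ FintypeCat.incl

/-!
A presheaf on finite sets lies in the essential image of the nerve iff it preserves finite
products (`P b ≅ (P 1)^b`), iff it is left exact, iff it is an ind-object (`𝔽` has finite
colimits). The monad `j^* j_!` preserves colimits and sends the representable at `a` to
`Θ(j -, j a)`. Since ind-objects are closed under filtered colimits, it therefore preserves flat
presheaves iff every `Θ(j -, j a)` preserves finite products; as `j` is surjective on objects,
by Yoneda this says exactly that `j` preserves finite coproducts. Finally, every finite product
diagram in `Θᵒᵖ` comes from one in `𝔽ᵒᵖ`, so a presheaf `P` on `Θ` preserves finite products iff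
`j.op ⋙ P` does.
-/

open Opposite

universe u

namespace CategoryTheory

lemma Limits.Types.bijective_fanLift_of_isLimit {J : Type u} {F : J → Type u} {c : Fan F}
    (hc : IsLimit c) : Function.Bijective fun (p : c.pt) (j : J) => c.proj j p := by
  have : IsIso ((Types.productLimitCone F).isLimit.lift c) :=
    (hc.conePointUniqueUpToIso (Types.productLimitCone F).isLimit).isIso_hom
  exact (isIso_iff_bijective _).1 this

lemma Limits.preservesFiniteProducts_op_of_comp_yoneda {C D : Type*} [Category C] [Category D]
    (F : C ⥤ D) (h : ∀ d, PreservesFiniteProducts (F.op ⋙ yoneda.obj d)) :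
    PreservesFiniteProducts F.op := by
  have : PreservesFiniteProducts (F.op ⋙ coyoneda) :=
    ⟨fun n => preservesLimitsOfShape_of_evaluation _ _ fun d => (h d).preserves n⟩
  exact preservesFiniteProducts_of_reflects_of_preserves F.op coyoneda

lemma Limits.preservesFiniteProducts_of_essSurj_of_comp {C D E : Type*} [Category C]
    [Category D] [Category E] (F : C ⥤ D) [F.EssSurj] [HasFiniteProducts C]
    [PreservesFiniteProducts F] (G : D ⥤ E) [PreservesFiniteProducts (F ⋙ G)] :
    PreservesFiniteProducts G where
  preserves n := ⟨fun {K} => by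
    let K' : Discrete (Fin n) ⥤ C := Discrete.functor fun i => F.objPreimage (K.obj ⟨i⟩)
    have : PreservesLimit (K' ⋙ F) G := preservesLimit_of_preserves_limit_cone
      (isLimitOfPreserves F (limit.isLimit K')) (isLimitOfPreserves (F ⋙ G) (limit.isLimit K'))
    exact preservesLimit_of_iso_diagram G
      (Discrete.natIso fun i => F.objObjPreimageIso (K.obj i) : K' ⋙ F ≅ K)⟩

lemma Limits.isIndObject_obj_of_preservesColimits {C D : Type u} [SmallCategory C]
    [SmallCategory D] (T : (Cᵒᵖ ⥤ Type u) ⥤ Dᵒᵖ ⥤ Type u) [PreservesColimits T]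
    (hT : ∀ c, IsIndObject (T.obj (yoneda.obj c))) {P : Cᵒᵖ ⥤ Type u} (hP : IsIndObject P) :
    IsIndObject (T.obj P) := by
  let p := hP.presentation
  have hc : IsColimit (T.mapCocone ⟨P, p.ι⟩) := isColimitOfPreserves T p.isColimit
  exact (isIndObject_colimit p.I (p.F ⋙ yoneda ⋙ T) fun i => hT (p.F.obj i)).map
    ((colimit.isColimit _).coconePointUniqueUpToIso hc).hom

namespace Functor

variable {C D : Type u} [SmallCategory C] [SmallCategory D] (F : C ⥤ D)

noncomputable def lanMonadObjYonedaIso (c : C) :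
    (F.op.lanAdjunction (Type u)).toMonad.obj (yoneda.obj c) ≅ F.op ⋙ yoneda.obj (F.obj c) :=
  isoWhiskerLeft F.op (F.op.lan.mapIso (uliftYonedaIsoYoneda.{u}.app c).symm ≪≫
      ((Presheaf.compULiftYonedaIsoULiftYonedaCompLan.{u} F).app c).symm ≪≫
        uliftYonedaIsoYoneda.{u}.app (F.obj c))

instance : PreservesColimits (F.op.lanAdjunction (Type u)).toMonad.toFunctor := by
  rw [Adjunction.toMonad_coe]
  have := (F.op.lanAdjunction (Type u)).leftAdjoint_preservesColimits
  infer_instance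

end Functor

end CategoryTheory

namespace FintypeCat.Skeleton

instance : HasFiniteColimits Skeleton.{0} :=
  ⟨fun _ _ _ => Adjunction.hasColimitsOfShape_of_equivalence incl⟩

-- Instance search does not unfold `(mk 1).len` to `1`.
instance : Unique (ULift.{0} (Fin (mk 1).len)) :=
  inferInstanceAs (Unique (ULift (Fin 1)))

def point {b : Skeleton.{0}} (x : ULift (Fin b.len)) : mk 1 ⟶ b := fun _ => x

def pointsCofan (b : Skeleton.{0}) : Cofan fun _ : ULift (Fin b.len) => mk 1 :=
  Cofan.mk b point

def isColimitPointsCofan (b : Skeleton.{0}) : IsColimit (pointsCofan b) :=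
  Cofan.IsColimit.mk _ (fun s z => s.inj z default)
    (fun s x => funext fun u => by rw [Subsingleton.elim u default]; rfl)
    (fun s m hm => funext fun z => congrFun (hm z) default)

end FintypeCat.Skeleton

instance : PreservesFiniteColimits finInclusion := by
  unfold finInclusion; infer_instance

namespace LawvereTheory

open FintypeCat.Skeleton

abbrev 𝔽 : Type := FintypeCat.Skeleton.{0}

noncomputable abbrev nerve : Type ⥤ 𝔽ᵒᵖ ⥤ Type := Presheaf.restrictedYoneda finInclusion

def toNerve (P : 𝔽ᵒᵖ ⥤ Type) : P ⟶ nerve.obj (P.obj (op (mk 1))) where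
  app b := TypeCat.ofHom fun p => TypeCat.ofHom fun x => P.map (point x).op p
  naturality b b' f := by
    ext p
    exact ConcreteCategory.hom_ext _ _ fun x => (P.map_comp_apply f (point x).op p).symm

instance isIso_toNerve (P : 𝔽ᵒᵖ ⥤ Type) [PreservesFiniteProducts P] : IsIso (toNerve P) := by
  refine @NatIso.isIso_of_isIso_app _ _ _ _ _ _ _ fun ⟨b⟩ => ?_
  have hP := isLimitMapConeFanMkEquiv P _ _
    (isLimitOfPreserves P (Cofan.IsColimit.op (isColimitPointsCofan b)))
  rw [isIso_iff_bijective]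
  exact TypeCat.homEquiv.symm.bijective.comp (Types.bijective_fanLift_of_isLimit hP)

lemma preservesFiniteLimits_of_mem_essImage_nerve {P : 𝔽ᵒᵖ ⥤ Type} (hP : nerve.essImage P) :
    PreservesFiniteLimits P := by
  obtain ⟨X, ⟨e⟩⟩ := hP
  have := preservesFiniteLimits_op finInclusion
  have : PreservesFiniteLimits (nerve.obj X) :=
    inferInstanceAs (PreservesFiniteLimits (finInclusion.op ⋙ yoneda.obj X))
  exact preservesFiniteLimits_of_natIso e

lemma mem_essImage_nerve_of_preservesFiniteProducts (P : 𝔽ᵒᵖ ⥤ Type)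
    [PreservesFiniteProducts P] : nerve.essImage P :=
  ⟨_, ⟨(asIso (toNerve P)).symm⟩⟩

lemma mem_essImage_nerve_iff_preservesFiniteProducts (P : 𝔽ᵒᵖ ⥤ Type) :
    nerve.essImage P ↔ Nonempty (PreservesFiniteProducts P) :=
  ⟨fun hP => have := preservesFiniteLimits_of_mem_essImage_nerve hP; ⟨inferInstance⟩,
    fun ⟨_⟩ => mem_essImage_nerve_of_preservesFiniteProducts P⟩

lemma mem_essImage_nerve_iff_isIndObject (P : 𝔽ᵒᵖ ⥤ Type) :
    nerve.essImage P ↔ IsIndObject P := by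
  rw [isIndObject_iff_preservesFiniteLimits]
  exact ⟨preservesFiniteLimits_of_mem_essImage_nerve,
    fun _ => mem_essImage_nerve_of_preservesFiniteProducts P⟩

variable {Θ : Type} [SmallCategory Θ] (j : 𝔽 ⥤ Θ)

lemma preservesFiniteCoproducts_of_lanMonad_preserves_nerve (hj : Function.Surjective j.obj)
    (H : ∀ P, nerve.essImage P → nerve.essImage ((j.op.lanAdjunction Type).toMonad.obj P)) :
    PreservesFiniteCoproducts j := by
  have hrep (a : 𝔽) : PreservesFiniteProducts (j.op ⋙ yoneda.obj (j.obj a)) :=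
    (mem_essImage_nerve_iff_preservesFiniteProducts _).1
      ((H _ (mem_essImage_nerve_of_preservesFiniteProducts _)).ofIso
        (j.lanMonadObjYonedaIso a)) |>.some
  have : PreservesFiniteProducts j.op := preservesFiniteProducts_op_of_comp_yoneda j fun θ => by
    obtain ⟨a, rfl⟩ := hj θ
    exact hrep a
  exact preservesFiniteCoproducts_unop j.op

lemma lanMonad_obj_mem_essImage_nerve [PreservesFiniteCoproducts j] {P : 𝔽ᵒᵖ ⥤ Type}
    (hP : nerve.essImage P) : nerve.essImage ((j.op.lanAdjunction Type).toMonad.obj P) := by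
  have := preservesFiniteProducts_op j
  rw [mem_essImage_nerve_iff_isIndObject] at hP ⊢
  refine isIndObject_obj_of_preservesColimits _ (fun a => ?_) hP
  rw [← mem_essImage_nerve_iff_isIndObject]
  exact (mem_essImage_nerve_of_preservesFiniteProducts _).ofIso (j.lanMonadObjYonedaIso a).symm

lemma mem_essImage_nerve_comp_iff (hj : Function.Surjective j.obj) [PreservesFiniteCoproducts j]
    (P : Θᵒᵖ ⥤ Type) : nerve.essImage (j.op ⋙ P) ↔ Nonempty (PreservesFiniteProducts P) := by
  have := preservesFiniteProducts_op j
  have := Functor.essSurj_of_surj hj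
  rw [mem_essImage_nerve_iff_preservesFiniteProducts]
  exact ⟨fun ⟨_⟩ => ⟨preservesFiniteProducts_of_essSurj_of_comp j.op P⟩,
    fun ⟨_⟩ => ⟨inferInstance⟩⟩

end LawvereTheory

open LawvereTheory in
/-- for `E = Set` with dense generator `A` a skeleton of finite sets,
a bijective-on-objects functor `j : A ⥤ Θ` is a theory with arities `A` (the monad
`j^* j_!` preserves flat presheaves, i.e. the essential image of the nerve) iff
`j` preserves finite coproducts (iff `Θᵒᵖ` is a Lawvere algebraic theory); and in
that case the `Θ`-models (presheaves on `Θ` restricting to flat presheaves on `A`)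
are exactly the finite-product-preserving functors `Θᵒᵖ ⥤ Set`, i.e. the models of
the Lawvere theory `Θᵒᵖ`. -/
theorem lawvere_theories {Θ : Type} [SmallCategory Θ]
    (j : FintypeCat.Skeleton.{0} ⥤ Θ) (hbij : Function.Bijective j.obj) :
    ((∀ P : FintypeCat.Skeleton.{0}ᵒᵖ ⥤ Type,
        (Presheaf.restrictedYoneda finInclusion).essImage P →
          (Presheaf.restrictedYoneda finInclusion).essImage
            (((j.op.lanAdjunction (Type 0)).toMonad).obj P)) ↔
      Nonempty (PreservesFiniteCoproducts j)) ∧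
    (Nonempty (PreservesFiniteCoproducts j) →
      ∀ P : Θᵒᵖ ⥤ Type,
        ((Presheaf.restrictedYoneda finInclusion).essImage
            (((Functor.whiskeringLeft _ _ (Type 0)).obj j.op).obj P) ↔
          Nonempty (PreservesFiniteProducts P))) :=
  ⟨⟨fun H => ⟨preservesFiniteCoproducts_of_lanMonad_preserves_nerve j hbij.2 H⟩,
      fun ⟨_⟩ _ => lanMonad_obj_mem_essImage_nerve j⟩,
    fun ⟨_⟩ => mem_essImage_nerve_comp_iff j hbij.2⟩
end
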